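/- Grounded semantics violates SCOOC: in the AF with arguments a, b, c, attacks a→a, a→b, b→c, the grounded extension is the empty set, which is not strongly complete outside odd cycles (since c and its only attacker b lie on no odd att-cycle, no attacker of c is in ∅, yet c ∉ ∅). -/

import Mathlib

inductive Arg : Type
  | a | b | c
deriving DecidableEq

instance : Fintype Arg where
  elems := {Arg.a, Arg.b, Arg.c}
  complete := by intro x; cases x <;> simp

/-- The attack relation: a→a, a→b, b→c. -/
def att : Arg → Arg → Prop := fun x y =>
  (x = .a ∧ y = .a) ∨ (x = .a ∧ y = .b) ∨ (x = .b ∧ y = .c)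

def conflictFree (att : Arg → Arg → Prop) (S : Set Arg) : Prop :=
  ∀ x ∈ S, ∀ y ∈ S, ¬ att x y

def attacks (att : Arg → Arg → Prop) (S : Set Arg) (x : Arg) : Prop :=
  ∃ y ∈ S, att y x

def defends (att : Arg → Arg → Prop) (S : Set Arg) (x : Arg) : Prop :=
  ∀ y, att y x → attacks att S y

def completeExt (att : Arg → Arg → Prop) (S : Set Arg) : Prop :=
  conflictFree att S ∧ (∀ x ∈ S, defends att S x) ∧ (∀ x, defends att S x → x ∈ S)

def groundedExt (att : Arg → Arg → Prop) (S : Set Arg) : Prop :=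
  completeExt att S ∧ ∀ T, completeExt att T → T ⊆ S → T = S

/-- `x` lies on a directed att-cycle of odd length (a self-attack counts as an
odd cycle of length 1); the vertices of the cycle are pairwise distinct. -/
def inOddCycle (att : Arg → Arg → Prop) (x : Arg) : Prop :=
  ∃ n : ℕ, Odd n ∧ ∃ p : ℕ → Arg, p 0 = x ∧ p n = x ∧
    (∀ i, i < n → att (p i) (p (i + 1))) ∧
    (∀ i j, i < j → j ≤ n → p i = p j → i = 0 ∧ j = n)

/-- `S` is strongly complete outside odd cycles. -/
def scooc (att : Arg → Arg → Prop) (S : Set Arg) : Prop :=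
  ∀ x, ¬ inOddCycle att x → (∀ y, att y x → ¬ inOddCycle att y) →
    (∀ b ∈ S, ¬ att b x) → x ∈ S

lemma no_attacks_empty (x : Arg) : ¬ attacks att (∅ : Set Arg) x := by
  rintro ⟨y, hy, -⟩; exact hy

lemma not_cyc_c : ¬ inOddCycle att .c := by
  rintro ⟨n, hn, p, h0, hne, hatt, -⟩
  have h1 := hatt 0 hn.pos
  rw [h0] at h1
  simp [att] at h1

lemma not_cyc_b : ¬ inOddCycle att .b := by
  rintro ⟨n, hn, p, h0, hne, hatt, -⟩
  have h1 := hatt 0 hn.pos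
  rw [h0] at h1
  have hp1 : p 1 = .c := by
    rcases h1 with ⟨h, -⟩ | ⟨h, -⟩ | ⟨-, h⟩ <;> simp_all
  by_cases hn1 : n = 1
  · rw [hn1] at hne; rw [hne] at hp1; exact Arg.noConfusion hp1
  · have hn2 : 1 < n := lt_of_le_of_ne hn.pos (Ne.symm hn1)
    have h2 := hatt 1 hn2
    rw [hp1] at h2
    simp [att] at h2

theorem grounded_violates_SCOOC :
    groundedExt att (∅ : Set Arg) ∧ ¬ scooc att (∅ : Set Arg) := by
  constructor
  · refine ⟨⟨fun x hx => hx.elim, fun x hx => hx.elim, ?_⟩, fun T _ hT => Set.subset_empty_iff.mp hT⟩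
    intro x hx
    cases x
    · exact absurd (hx .a (by simp [att])) (no_attacks_empty _)
    · exact absurd (hx .a (by simp [att])) (no_attacks_empty _)
    · exact absurd (hx .b (by simp [att])) (no_attacks_empty _)
  · intro h
    have := h .c not_cyc_c (fun y hy => by
      rcases hy with ⟨h1, h2⟩ | ⟨h1, h2⟩ | ⟨h1, h2⟩ <;> simp_all [not_cyc_b]) (fun b hb => hb.elim)
    exact this
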